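/- Let S be a set of pmfs such that q = ⋀S exists. Then the masses of q are nonincreasing: q(1) ≥ q(2) ≥ q(3) ≥ ⋯. -/
import Mathlib


open scoped ENNReal Classical
open Filter

namespace MEC

/-- A probability mass function on `α`: (nonnegative) masses summing to `1`. -/
def IsPMF {α : Type*} (p : α → ℝ≥0∞) : Prop := ∑' x, p x = 1

/-- `p` is an aggregation of `q`, written `q ⊑ p`: there is a map `g` sending the support of
`q` into the support of `p` such that `p` is the pushforward of `q` under `g`. -/
def Agg {α β : Type*} (q : α → ℝ≥0∞) (p : β → ℝ≥0∞) : Prop :=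
  ∃ g : α → β, (∀ x, q x ≠ 0 → p (g x) ≠ 0) ∧
    ∀ y, p y = ∑' x, if g x = y then q x else 0

/-- Sum of the `k` largest masses of `p`, i.e. `max_{A, |A| ≤ k} p(A)`. -/
noncomputable def topk {α : Type*} (p : α → ℝ≥0∞) (k : ℕ) : ℝ≥0∞ :=
  ⨆ (A : Finset α) (_ : A.card ≤ k), ∑ x ∈ A, p x

/-- `q` is majorized by `p`, written `q ⪯ p`: for every `k`, the sum of the `k` largest
masses of `q` is at most the sum of the `k` largest masses of `p`. -/
def Majorized {α β : Type*} (q : α → ℝ≥0∞) (p : β → ℝ≥0∞) : Prop :=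
  ∀ k : ℕ, topk q k ≤ topk p k

/-- Product pmf `(q × r)(x,z) = q(x) · r(z)`. -/
noncomputable def prodFun {α β : Type*} (q : α → ℝ≥0∞) (r : β → ℝ≥0∞) : α × β → ℝ≥0∞ :=
  fun z => q z.1 * r z.2

/-- `Geom_{1/2}` on `ℕ+ = {1,2,3,...}`, with mass `2^{-x}` at `x`. -/
noncomputable def geomHalf : ℕ+ → ℝ≥0∞ := fun x => 2⁻¹ ^ (x : ℕ)

/-- Capped geometric distribution `CGeom_{1/2,k}` on `{1,...,k} ⊆ ℕ+`. -/
noncomputable def cgeomHalf (k : ℕ) : ℕ+ → ℝ≥0∞ := fun x =>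
  if (x : ℕ) < k then 2⁻¹ ^ (x : ℕ) else if (x : ℕ) = k then 2⁻¹ ^ (k - 1) else 0

/-- `inf_{p ∈ S} max_{A ⊆ supp(p), |A| ≤ k} p(A)`. -/
noncomputable def infTopk {α : Type*} (S : Set (α → ℝ≥0∞)) (k : ℕ) : ℝ≥0∞ :=
  ⨅ p ∈ S, topk p k

/-- The greatest lower bound `⋀S` of `S` with respect to majorization, as a pmf on
`ℕ+ = {1,2,...}`, with `(⋀S)(k) = inf_{p∈S} max_{|A|≤k} p(A) − inf_{p∈S} max_{|A|≤k−1} p(A)`. -/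
noncomputable def glb {α : Type*} (S : Set (α → ℝ≥0∞)) : ℕ+ → ℝ≥0∞ :=
  fun k => infTopk S (k : ℕ) - infTopk S ((k : ℕ) - 1)

/-- Condition for the existence of `⋀S`:
`lim_{k→∞} inf_{p∈S} max_{A⊆supp(p), |A|≤k} p(A) = 1`. -/
def GlbExists {α : Type*} (S : Set (α → ℝ≥0∞)) : Prop :=
  Tendsto (fun k => infTopk S k) atTop (nhds 1)

/-- Base-2 logarithm on `ℝ≥0∞` (intended for arguments in `[1,∞]`). -/
noncomputable def log2 (x : ℝ≥0∞) : ℝ≥0∞ :=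
  if x = ∞ then ∞ else ENNReal.ofReal (Real.logb 2 x.toReal)

/-- Shannon entropy (base 2): `H(p) = Σ_x p(x) log₂ (1/p(x))`. -/
noncomputable def shannon {α : Type*} (p : α → ℝ≥0∞) : ℝ≥0∞ :=
  ∑' x, p x * log2 (p x)⁻¹

/-- Rényi entropy of order `a ∈ [0,∞]` (base 2):
`H_a(p) = (1/(1−a)) log₂ Σ_{x ∈ supp(p)} p(x)^a` for `a ∉ {1,∞}` (for `a > 1` this is
written in the equivalent form `(1/(a−1)) log₂ (Σ_{x ∈ supp(p)} p(x)^a)⁻¹` so that it is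
nonnegative), Shannon entropy for `a = 1`, and `−log₂ max_x p(x)` for `a = ∞`. -/
noncomputable def renyi {α : Type*} (p : α → ℝ≥0∞) (a : ℝ≥0∞) : ℝ≥0∞ :=
  if a = 1 then shannon p
  else if a = ∞ then log2 (⨆ x, p x)⁻¹
  else if a < 1 then log2 (∑' x, if p x = 0 then 0 else p x ^ a.toReal) * (1 - a)⁻¹
  else log2 (∑' x, if p x = 0 then 0 else p x ^ a.toReal)⁻¹ * (a - 1)⁻¹

/-- `q ∈ Γ̃(S)`: `q` (a pmf over `ℕ`, without loss of generality) is an underlying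
distribution of a coupling of `S`, i.e. `q ⊑ p` for every `p ∈ S`. -/
def UnderlyingCoupling {α : Type*} (S : Set (α → ℝ≥0∞)) (q : ℕ → ℝ≥0∞) : Prop :=
  IsPMF q ∧ ∀ p ∈ S, Agg q p

/-- `H*_a(S) = inf_{q ∈ Γ̃(S)} H_a(q)`, the minimum Rényi entropy of couplings of `S`. -/
noncomputable def minRenyi {α : Type*} (S : Set (α → ℝ≥0∞)) (a : ℝ≥0∞) : ℝ≥0∞ :=
  ⨅ (q : ℕ → ℝ≥0∞) (_ : UnderlyingCoupling S q), renyi q a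


lemma sum_le_topk {α : Type*} (p : α → ℝ≥0∞) {A : Finset α} {k : ℕ} (hA : A.card ≤ k) :
    ∑ x ∈ A, p x ≤ topk p k :=
  le_iSup₂ (f := fun (A : Finset α) (_ : A.card ≤ k) => ∑ x ∈ A, p x) A hA

lemma topk_mono {α : Type*} (p : α → ℝ≥0∞) : Monotone (topk p) := by
  intro m n hmn
  refine iSup₂_le fun A hA => sum_le_topk p (hA.trans hmn)

lemma topk_le_one {α : Type*} {p : α → ℝ≥0∞} (hp : IsPMF p) (k : ℕ) : topk p k ≤ 1 := by
  refine iSup₂_le fun A hA => ?_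
  rw [← hp]
  exact ENNReal.sum_le_tsum A

lemma topk_eq {α : Type*} (p : α → ℝ≥0∞) (k : ℕ) :
    topk p k = ⨆ A : {A : Finset α // A.card ≤ k}, ∑ x ∈ A.1, p x := by
  rw [topk, iSup_subtype']

lemma topk_concave {α : Type*} (p : α → ℝ≥0∞) (k : ℕ) (hk : 1 ≤ k) :
    topk p (k + 1) + topk p (k - 1) ≤ topk p k + topk p k := by
  rw [topk_eq p (k+1), topk_eq p (k-1)]
  have h1 : Nonempty {A : Finset α // A.card ≤ k + 1} := ⟨⟨∅, by simp⟩⟩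
  have h2 : Nonempty {A : Finset α // A.card ≤ k - 1} := ⟨⟨∅, by simp⟩⟩
  refine ENNReal.iSup_add_iSup_le fun A B => ?_
  obtain ⟨A, hA⟩ := A
  obtain ⟨B, hB⟩ := B
  by_cases hAk : A.card ≤ k
  · exact add_le_add (sum_le_topk p hAk) (sum_le_topk p (hB.trans (Nat.sub_le k 1)))
  · have hAcard : A.card = k + 1 := le_antisymm hA (Nat.not_le.mp hAk)
    have hBA : B.card < A.card := by omega
    obtain ⟨x, hxA, hxB⟩ : ∃ x ∈ A, x ∉ B := by
      by_contra h
      push_neg at h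
      exact absurd (Finset.card_le_card h) (Nat.not_le.mpr hBA)
    have hsplit : ∑ x ∈ A, p x = p x + ∑ y ∈ A.erase x, p y :=
      (Finset.add_sum_erase A p hxA).symm
    have hins : ∑ y ∈ insert x B, p y = p x + ∑ y ∈ B, p y :=
      Finset.sum_insert hxB
    have e1 : (A.erase x).card ≤ k := by
      rw [Finset.card_erase_of_mem hxA, hAcard]; omega
    have e2 : (insert x B).card ≤ k := by
      rw [Finset.card_insert_of_notMem hxB]; omega
    calc ∑ y ∈ A, p y + ∑ y ∈ B, p y
        = ∑ y ∈ A.erase x, p y + ∑ y ∈ insert x B, p y := by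
          rw [hsplit, hins]; ring
      _ ≤ topk p k + topk p k := add_le_add (sum_le_topk p e1) (sum_le_topk p e2)

lemma infTopk_sub_antitone {α : Type*}
    (S : Set (α → ℝ≥0∞)) (hS : ∀ p ∈ S, IsPMF p) :
    ∀ k : ℕ+, (infTopk S ((k:ℕ)+1) - infTopk S (k:ℕ)) ≤
      infTopk S (k:ℕ) - infTopk S ((k:ℕ)-1) := by
  intro k
  rcases S.eq_empty_or_nonempty with rfl | ⟨p0, hp0⟩
  · simp [infTopk]
  set f : ℕ → ℝ≥0∞ := infTopk S with hf
  have hfmono : Monotone f := fun m n h => iInf₂_mono fun p _ => topk_mono p h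
  have hfle : ∀ n, f n ≤ 1 := fun n =>
    le_trans (iInf₂_le p0 hp0) (topk_le_one (hS p0 hp0) n)
  have hfin : ∀ n, f n ≠ ∞ := fun n => ne_top_of_le_ne_top ENNReal.one_ne_top (hfle n)
  have hk1 : (1:ℕ) ≤ (k:ℕ) := k.one_le
  have hconc : f ((k:ℕ)+1) + f ((k:ℕ)-1) ≤ f (k:ℕ) + f (k:ℕ) := by
    have key : f ((k:ℕ)+1) + f ((k:ℕ)-1) ≤ ⨅ p ∈ S, (topk p (k:ℕ) + topk p (k:ℕ)) := by
      refine le_iInf₂ fun p hp => ?_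
      calc f ((k:ℕ)+1) + f ((k:ℕ)-1)
          ≤ topk p ((k:ℕ)+1) + topk p ((k:ℕ)-1) :=
            add_le_add (iInf₂_le p hp) (iInf₂_le p hp)
        _ ≤ topk p (k:ℕ) + topk p (k:ℕ) := topk_concave p (k:ℕ) hk1
    refine key.trans ?_
    have heq : (⨅ p ∈ S, (topk p (k:ℕ) + topk p (k:ℕ))) = ⨅ p ∈ S, 2 * topk p (k:ℕ) := by
      simp [two_mul]
    rw [heq]
    have h2 : (⨅ p ∈ S, 2 * topk p (k:ℕ)) = 2 * f (k:ℕ) := by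
      rw [hf, infTopk, iInf_subtype', iInf_subtype',
        ENNReal.mul_iInf_of_ne (by norm_num) (by norm_num)]
    rw [h2, two_mul]
  rw [tsub_le_iff_right]
  have hle : f ((k:ℕ)-1) ≤ f (k:ℕ) := hfmono (Nat.sub_le _ _)
  rw [← ENNReal.add_le_add_iff_right (hfin ((k:ℕ)-1))]
  calc f ((k:ℕ)+1) + f ((k:ℕ)-1) ≤ f (k:ℕ) + f (k:ℕ) := hconc
    _ = f (k:ℕ) - f ((k:ℕ)-1) + f (k:ℕ) + f ((k:ℕ)-1) := by
        rw [add_right_comm, tsub_add_cancel_of_le hle]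

/-- Proposition 3(1): the masses of `q = ⋀S` are nonincreasing:
`q(1) ≥ q(2) ≥ q(3) ≥ ⋯`. -/
theorem glb_masses_antitone {α : Type*} [Countable α]
    (S : Set (α → ℝ≥0∞)) (hS : ∀ p ∈ S, IsPMF p) (hex : GlbExists S) :
    ∀ k : ℕ+, glb S (k + 1) ≤ glb S k := by
  intro k
  have h := infTopk_sub_antitone S hS k
  have hc : ((k + 1 : ℕ+) : ℕ) = (k : ℕ) + 1 := rfl
  simpa [glb, hc] using h

end MEC
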